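/- Let (W,S) be a Coxeter system and u, v, x, y ∈ W. If u ≤ v and y ≤ x in Bruhat order, and x⁻¹ ≤_L u in the left weak order (i.e., ℓ(u) = ℓ(x⁻¹) + ℓ(ux)), then ux ≤ vy in Bruhat order. -/

import Mathlib

/-- The Bruhat order on a Coxeter group. -/
def bruhatLE {B W : Type*} [Group W] {M : CoxeterMatrix B} (cs : CoxeterSystem M W)
    (u v : W) : Prop :=
  ∃ ω : List B, cs.IsReduced ω ∧ cs.wordProd ω = v ∧
    ∃ ω' : List B, ω'.Sublist ω ∧ cs.IsReduced ω' ∧ cs.wordProd ω' = u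

/-- The standard parabolic subgroup generated by the simple reflections in `I`. -/
def parabolic {B W : Type*} [Group W] {M : CoxeterMatrix B} (cs : CoxeterSystem M W)
    (I : Set B) : Subgroup W :=
  Subgroup.closure (cs.simple '' I)

/-- The double coset `W_I w W_J`. -/
def doubleCoset {B W : Type*} [Group W] {M : CoxeterMatrix B} (cs : CoxeterSystem M W)
    (I J : Set B) (w : W) : Set W :=
  {x : W | ∃ a ∈ parabolic cs I, ∃ b ∈ parabolic cs J, x = a * w * b}

/-!
Induction on `ℓ(x)`. Write `x = x's` with `s` a right descent of `x`. The length condition passes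
to `x'` and gives `ux < ux' = uxs`. If `s` is not a descent of `y`, the lifting property gives
`y ≤ x'`, hence `ux < ux' ≤ vy`. If it is, lifting gives `ys ≤ x'`, hence `ux' ≤ vys`; then
either `vys < vy` and `ux < ux' ≤ vys < vy`, or `s` is a descent of both `ux'` and `vys` and
lifting once more gives `ux ≤ vy`.

Transitivity and the lifting property are read off the subword definition once one knows that
`u ≤ v` makes `u` a subword of *every* reduced word of `v`. That comes from comparing with the
order generated by `wt < w` for reflections `t`: such chains give subwords of every word by the
strong exchange condition, and subwords give chains, adding one letter at a time. Strong exchange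
in turn comes from the reflection cocycle: `W` acts on `W × ZMod 2` by
`s • (t, ε) = (sts, ε + [t = s])`, and the second coordinate of `w • (t, 0)` is both the parity
of the number of occurrences of `t` in the right inversion sequence of any word for `w` and
the indicator of `ℓ(wt) < ℓ(w)`.
-/

namespace CoxeterSystem

variable {B W : Type*} [Group W] {M : CoxeterMatrix B} (cs : CoxeterSystem M W)

local prefix:100 "s" => cs.simple
local prefix:100 "π" => cs.wordProd
local prefix:100 "ℓ" => cs.length
local prefix:100 "ris " => cs.rightInvSeq

theorem simple_mul_mul_simple_eq_iff (i : B) (t w : W) :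
    s i * t * s i = w ↔ t = s i * w * s i := by
  constructor <;> rintro rfl <;> simp [mul_assoc]

-- Acts on all of `W × ZMod 2` rather than on `T × ZMod 2` (`T` the reflections): no subtype.
open Classical in
noncomputable def simplePerm (i : B) : Equiv.Perm (W × ZMod 2) :=
  Function.Involutive.toPerm (fun p ↦ (s i * p.1 * s i, p.2 + if p.1 = s i then 1 else 0)) (by
    rintro ⟨t, z⟩
    have h : s i * t * s i = s i ↔ t = s i := by
      rw [simple_mul_mul_simple_eq_iff, simple_mul_simple_self, one_mul]
    simp only [h, Prod.mk.injEq, add_assoc, CharTwo.add_self_eq_zero, add_zero, and_true]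
    simp [mul_assoc])

open Classical in
theorem simplePerm_apply (i : B) (t : W) (z : ZMod 2) :
    cs.simplePerm i (t, z) = (s i * t * s i, z + if t = s i then 1 else 0) := rfl

theorem simple_mul_simple_pow_inv_mul_simple (i i' : B) (n : ℕ) :
    ((s i * s i') ^ n)⁻¹ * s i' = s i' * (s i * s i') ^ n := by
  have h : s i' * (s i * s i') * (s i')⁻¹ = (s i * s i')⁻¹ := by simp [mul_assoc]
  rw [← inv_pow, ← h, conj_pow, inv_simple]
  simp [mul_assoc]

theorem simple_mul_simple_pow_conj_eq_iff (i i' : B) (k j : ℕ) (t : W) :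
    (s i * s i') ^ k * t * ((s i * s i') ^ k)⁻¹ = s i' * (s i * s i') ^ j ↔
      t = s i' * (s i * s i') ^ (2 * k + j) := by
  have key : ((s i * s i') ^ k)⁻¹ * (s i' * (s i * s i') ^ j) * (s i * s i') ^ k =
      s i' * (s i * s i') ^ (2 * k + j) := by
    rw [← mul_assoc, simple_mul_simple_pow_inv_mul_simple, mul_assoc, mul_assoc, ← pow_add,
      ← pow_add]
    ring_nf
  rw [← key]
  constructor
  · rintro h
    rw [← h]
    group
  · rintro rfl
    group

open Classical in
theorem simplePerm_mul_pow_apply (i i' : B) (k : ℕ) (t : W) (z : ZMod 2) :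
    ((cs.simplePerm i * cs.simplePerm i') ^ k) (t, z) =
      ((s i * s i') ^ k * t * ((s i * s i') ^ k)⁻¹,
        z + ∑ n ∈ Finset.range (2 * k), if t = s i' * (s i * s i') ^ n then 1 else 0) := by
  induction k with
  | zero => simp
  | succ k ih =>
    set q := (s i * s i') ^ k * t * ((s i * s i') ^ k)⁻¹
    have h0 : q = s i' ↔ t = s i' * (s i * s i') ^ (2 * k) := by
      simpa using simple_mul_simple_pow_conj_eq_iff cs i i' k 0 t
    have h1 : s i' * q * s i' = s i ↔ t = s i' * (s i * s i') ^ (2 * k + 1) := by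
      rw [simple_mul_mul_simple_eq_iff, ← simple_mul_simple_pow_conj_eq_iff, pow_one, mul_assoc]
    rw [pow_succ', Equiv.Perm.mul_apply, ih, Equiv.Perm.mul_apply, simplePerm_apply,
      simplePerm_apply, h0, h1, mul_add_one, Finset.sum_range_succ, Finset.sum_range_succ]
    simp only [Prod.mk.injEq, add_assoc, and_true, q]
    simp [pow_succ', mul_assoc]

theorem isLiftable_simplePerm : M.IsLiftable cs.simplePerm := by
  intro i i'
  ext ⟨t, z⟩ : 1
  classical
  have hper : ∀ n, (s i * s i') ^ (M i i' + n) = (s i * s i') ^ n := by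
    simp [pow_add, simple_mul_simple_pow]
  rw [simplePerm_mul_pow_apply, two_mul, Finset.sum_range_add]
  simp [hper, simple_mul_simple_pow, CharTwo.add_self_eq_zero]

noncomputable def reflectionRep : W →* Equiv.Perm (W × ZMod 2) :=
  cs.lift ⟨cs.simplePerm, cs.isLiftable_simplePerm⟩

theorem reflectionRep_simple (i : B) : cs.reflectionRep (s i) = cs.simplePerm i :=
  cs.lift_apply_simple cs.isLiftable_simplePerm i

open Classical in
theorem reflectionRep_wordProd (ω : List B) (t : W) (z : ZMod 2) :
    cs.reflectionRep (π ω) (t, z) = (π ω * t * (π ω)⁻¹, z + (ris ω).count t) := by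
  induction ω with
  | nil => simp
  | cons i ω ih =>
    have h : π ω * t * (π ω)⁻¹ = s i ↔ (π ω)⁻¹ * s i * π ω = t := by
      constructor <;> intro h <;> rw [← h] <;> group
    rw [wordProd_cons, map_mul, Equiv.Perm.mul_apply, ih, reflectionRep_simple, simplePerm_apply,
      h]
    simp [rightInvSeq, List.count_cons, add_assoc, mul_assoc]

noncomputable def reflectionCocycle (w t : W) : ZMod 2 := (cs.reflectionRep w (t, 0)).2

theorem reflectionRep_apply (w t : W) (z : ZMod 2) :
    cs.reflectionRep w (t, z) = (w * t * w⁻¹, z + cs.reflectionCocycle w t) := by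
  obtain ⟨ω, rfl⟩ := cs.wordProd_surjective w
  simp [reflectionCocycle, reflectionRep_wordProd]

open Classical in
theorem reflectionCocycle_wordProd (ω : List B) (t : W) :
    cs.reflectionCocycle (π ω) t = (ris ω).count t := by
  simp [reflectionCocycle, reflectionRep_wordProd]

theorem reflectionCocycle_mul (v w t : W) :
    cs.reflectionCocycle (v * w) t =
      cs.reflectionCocycle w t + cs.reflectionCocycle v (w * t * w⁻¹) := by
  have h := congrArg Prod.snd (cs.reflectionRep_apply (v * w) t 0)
  rw [map_mul, Equiv.Perm.mul_apply, reflectionRep_apply, reflectionRep_apply] at h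
  simpa using h.symm

open Classical in
theorem reflectionCocycle_simple (i : B) (t : W) :
    cs.reflectionCocycle (s i) t = if t = s i then 1 else 0 := by
  simp [reflectionCocycle, reflectionRep_simple, simplePerm_apply]

theorem reflectionCocycle_one (t : W) : cs.reflectionCocycle 1 t = 0 := by
  simp [reflectionCocycle]

theorem IsReflection.reflectionCocycle_self {t : W} (ht : cs.IsReflection t) :
    cs.reflectionCocycle t t = 1 := by
  obtain ⟨w, i, rfl⟩ := ht
  have hconj : w⁻¹ * (w * s i * w⁻¹) * w = s i := by group
  have h := cs.reflectionCocycle_mul w w⁻¹ (w * s i * w⁻¹)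
  rw [mul_inv_cancel, reflectionCocycle_one, inv_inv, hconj] at h
  rw [reflectionCocycle_mul, reflectionCocycle_mul, reflectionCocycle_simple, inv_inv, hconj]
  simp only [if_pos, inv_simple, simple_mul_simple_self, one_mul]
  linear_combination -h

variable {cs}

theorem reflectionCocycle_eq_zero_of_not_isRightInversion {w t : W}
    (h : ¬cs.IsRightInversion w t) : cs.reflectionCocycle w t = 0 := by
  classical
  obtain ⟨ω, hω, rfl⟩ := cs.exists_isReduced w
  have ht : t ∉ ris ω := fun ht ↦ h (cs.isRightInversion_of_mem_rightInvSeq hω ht)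
  rw [reflectionCocycle_wordProd, List.count_eq_zero.mpr ht, Nat.cast_zero]

theorem IsRightInversion.reflectionCocycle_eq_one {w t : W} (h : cs.IsRightInversion w t) :
    cs.reflectionCocycle w t = 1 := by
  have hwt : ¬cs.IsRightInversion (w * t) t := h.1.not_isRightInversion_mul_left_iff.mpr h
  have key := cs.reflectionCocycle_mul (w * t) t t
  rw [mul_assoc, h.1.mul_self, mul_one, h.1.reflectionCocycle_self, one_mul, h.1.inv,
    reflectionCocycle_eq_zero_of_not_isRightInversion hwt, add_zero] at key
  exact key

theorem isRightInversion_iff_reflectionCocycle_eq_one {w t : W} :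
    cs.IsRightInversion w t ↔ cs.reflectionCocycle w t = 1 := by
  refine ⟨IsRightInversion.reflectionCocycle_eq_one, fun h ↦ ?_⟩
  by_contra hn
  rw [reflectionCocycle_eq_zero_of_not_isRightInversion hn] at h
  exact zero_ne_one h

theorem IsRightInversion.mem_rightInvSeq {ω : List B} {t : W}
    (h : cs.IsRightInversion (π ω) t) : t ∈ ris ω := by
  classical
  have h1 := h.reflectionCocycle_eq_one
  rw [reflectionCocycle_wordProd] at h1
  by_contra hn
  rw [List.count_eq_zero.mpr hn, Nat.cast_zero] at h1
  exact zero_ne_one h1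

theorem IsRightInversion.exists_wordProd_eraseIdx {ω : List B} {t : W}
    (h : cs.IsRightInversion (π ω) t) : ∃ j < ω.length, π (ω.eraseIdx j) = π ω * t := by
  obtain ⟨j, hj, rfl⟩ := List.mem_iff_getElem.mp h.mem_rightInvSeq
  refine ⟨j, by simpa using hj, ?_⟩
  rw [← wordProd_mul_getD_rightInvSeq, List.getD_eq_getElem]

theorem isRightInversion_mul_simple_iff {w t : W} {i : B} (hti : t ≠ s i) :
    cs.IsRightInversion (w * s i) (s i * t * s i) ↔ cs.IsRightInversion w t := by
  rw [isRightInversion_iff_reflectionCocycle_eq_one, isRightInversion_iff_reflectionCocycle_eq_one,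
    reflectionCocycle_mul, reflectionCocycle_simple, simple_mul_mul_simple_eq_iff,
    simple_mul_simple_self, one_mul, if_neg hti, zero_add]
  simp [mul_assoc]

theorem isReduced_append_singleton_iff {ω : List B} {i : B} :
    cs.IsReduced (ω ++ [i]) ↔ cs.IsReduced ω ∧ ¬cs.IsRightDescent (π ω) i := by
  have hle := cs.length_wordProd_le ω
  rw [not_isRightDescent_iff]
  constructor
  · intro h
    have hω : cs.IsReduced ω := by simpa using h.take ω.length
    refine ⟨hω, ?_⟩
    have := h.eq
    have := cs.length_mul_simple (π ω) i
    simp only [wordProd_append, wordProd_singleton, List.length_append, List.length_singleton] at *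
    omega
  · rintro ⟨hω, h⟩
    simp [IsReduced, wordProd_append, h, hω.eq]

theorem exists_isReduced_sublist (ω : List B) :
    ∃ ω' : List B, ω'.Sublist ω ∧ cs.IsReduced ω' ∧ π ω' = π ω := by
  induction ω using List.reverseRecOn with
  | nil => exact ⟨[], .refl _, by simp [IsReduced], rfl⟩
  | append_singleton κ i ih =>
    obtain ⟨κ', hsub, hred, hprod⟩ := ih
    rw [wordProd_append, wordProd_singleton, ← hprod]
    by_cases hdesc : cs.IsRightDescent (π κ') i
    swap
    · exact ⟨κ' ++ [i], hsub.append (.refl _),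
        isReduced_append_singleton_iff.mpr ⟨hred, hdesc⟩, by simp [wordProd_append]⟩
    · obtain ⟨j, hj, hprod'⟩ :=
        (IsRightInversion.exists_wordProd_eraseIdx ⟨cs.isReflection_simple i, hdesc⟩ :)
      refine ⟨κ'.eraseIdx j,
        ((κ'.eraseIdx_sublist j).trans hsub).trans (List.sublist_append_left _ _), ?_, hprod'⟩
      have := List.length_eraseIdx_add_one hj
      have := cs.isRightDescent_iff.mp hdesc
      have := hred.eq
      rw [IsReduced, hprod']
      omega

def BruhatStep (u w : W) : Prop := ∃ t, cs.IsRightInversion w t ∧ w * t = u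

theorem bruhatStep_mul_simple {w : W} {i : B} (h : ¬cs.IsRightDescent w i) :
    cs.BruhatStep w (w * s i) :=
  ⟨s i, (cs.isRightInversion_simple_iff_isRightDescent _ i).mpr
    (cs.isRightDescent_iff_not_isRightDescent_mul.mpr (by simpa using h)), by simp⟩

theorem BruhatStep.mul_simple {a b : W} (h : cs.BruhatStep a b) (i : B) :
    a * s i = b ∨ cs.BruhatStep (a * s i) (b * s i) := by
  obtain ⟨t, ht, rfl⟩ := h
  by_cases hti : t = s i
  · left
    rw [hti, simple_mul_simple_cancel_right]
  · right
    exact ⟨s i * t * s i, (isRightInversion_mul_simple_iff hti).mpr ht, by simp [mul_assoc]⟩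

theorem exists_sublist_of_reflTransGen_bruhatStep {u v : W}
    (h : Relation.ReflTransGen cs.BruhatStep u v) {ω : List B} (hv : π ω = v) :
    ∃ ω' : List B, ω'.Sublist ω ∧ π ω' = u := by
  induction h generalizing ω with
  | refl => exact ⟨ω, .refl _, hv⟩
  | tail _ hstep ih =>
    subst hv
    obtain ⟨t, ht, rfl⟩ := hstep
    obtain ⟨j, -, hj⟩ := ht.exists_wordProd_eraseIdx
    obtain ⟨ω', hsub, hω'⟩ := ih hj
    exact ⟨ω', hsub.trans (ω.eraseIdx_sublist j), hω'⟩

theorem reflTransGen_bruhatStep_mul_simple {a w : W}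
    (h : Relation.ReflTransGen cs.BruhatStep a w) (i : B) :
    Relation.ReflTransGen cs.BruhatStep (a * s i) w ∨
      Relation.ReflTransGen cs.BruhatStep (a * s i) (w * s i) := by
  induction h using Relation.ReflTransGen.head_induction_on with
  | refl => exact .inr .refl
  | head hstep hbw ih =>
    rcases hstep.mul_simple i with heq | hstep'
    · exact .inl (heq ▸ hbw)
    · exact ih.imp (.head hstep') (.head hstep')

theorem reflTransGen_bruhatStep_of_sublist {ω ω' : List B} (hω : cs.IsReduced ω)
    (hsub : ω'.Sublist ω) (hω' : cs.IsReduced ω') :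
    Relation.ReflTransGen cs.BruhatStep (π ω') (π ω) := by
  induction ω using List.reverseRecOn generalizing ω' with
  | nil =>
    rw [List.sublist_nil.mp hsub]
  | append_singleton κ i ih =>
    obtain ⟨hκ, hasc⟩ := isReduced_append_singleton_iff.mp hω
    have hstep := bruhatStep_mul_simple hasc
    rw [wordProd_append, wordProd_singleton]
    obtain ⟨l₁, l₂, rfl, hl₁, hl₂⟩ := List.sublist_append_iff.mp hsub
    rcases List.sublist_singleton.mp hl₂ with rfl | rfl
    · rw [List.append_nil] at hω' ⊢
      exact (ih hκ hl₁ hω').tail hstep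
    · rw [wordProd_append, wordProd_singleton]
      rcases reflTransGen_bruhatStep_mul_simple
        (ih hκ hl₁ (isReduced_append_singleton_iff.mp hω').1) i with h | h
      · exact h.tail hstep
      · exact h

theorem exists_sublist_of_bruhatLE {u v : W} (h : bruhatLE cs u v) {ω : List B}
    (hv : π ω = v) :
    ∃ ω' : List B, ω'.Sublist ω ∧ cs.IsReduced ω' ∧ π ω' = u := by
  obtain ⟨ω₀, hω₀, rfl, ω₀', hsub, hω₀', rfl⟩ := h
  obtain ⟨ω₁, hsub₁, hω₁⟩ := exists_sublist_of_reflTransGen_bruhatStep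
    (reflTransGen_bruhatStep_of_sublist hω₀ hsub hω₀') hv
  obtain ⟨ω', hsub', hω', hprod⟩ := cs.exists_isReduced_sublist ω₁
  exact ⟨ω', hsub'.trans hsub₁, hω', hprod.trans hω₁⟩

theorem bruhatLE_trans {u v w : W} (huv : bruhatLE cs u v) (hvw : bruhatLE cs v w) :
    bruhatLE cs u w := by
  obtain ⟨ω, hω, rfl, ωv, hsubv, hωv, rfl⟩ := hvw
  obtain ⟨ωu, hsubu, hωu, rfl⟩ := exists_sublist_of_bruhatLE huv rfl
  exact ⟨ω, hω, rfl, ωu, hsubu.trans hsubv, hωu, rfl⟩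

theorem length_le_of_bruhatLE {u v : W} (h : bruhatLE cs u v) : ℓ u ≤ ℓ v := by
  obtain ⟨ω, hω, rfl, ω', hsub, hω', rfl⟩ := h
  rw [hω.eq, hω'.eq]
  exact hsub.length_le

theorem IsRightDescent.exists_isReduced_append_singleton {w : W} {i : B}
    (h : cs.IsRightDescent w i) :
    ∃ κ : List B, cs.IsReduced (κ ++ [i]) ∧ π (κ ++ [i]) = w ∧ π κ = w * s i := by
  obtain ⟨κ, hκ, hκw⟩ := cs.exists_isReduced (w * s i)
  refine ⟨κ, isReduced_append_singleton_iff.mpr ⟨hκ, ?_⟩,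
    by simp [wordProd_append, ← hκw], hκw.symm⟩
  rwa [← hκw, ← cs.isRightDescent_iff_not_isRightDescent_mul]

theorem bruhatLE_mul_simple_self {w : W} {i : B} (h : cs.IsRightDescent w i) :
    bruhatLE cs (w * s i) w := by
  obtain ⟨κ, hred, hw, hκ⟩ := h.exists_isReduced_append_singleton
  exact ⟨κ ++ [i], hred, hw, κ, List.sublist_append_left _ _,
    (isReduced_append_singleton_iff.mp hred).1, hκ⟩

theorem bruhatLE_mul_simple_or {a w : W} {i : B} (h : bruhatLE cs a w)
    (hw : cs.IsRightDescent w i) :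
    bruhatLE cs a (w * s i) ∨ cs.IsRightDescent a i ∧ bruhatLE cs (a * s i) (w * s i) := by
  obtain ⟨κ, hred, hw, hκ⟩ := hw.exists_isReduced_append_singleton
  obtain ⟨hκred, -⟩ := isReduced_append_singleton_iff.mp hred
  obtain ⟨ω', hsub, hω', rfl⟩ := exists_sublist_of_bruhatLE h hw
  obtain ⟨l₁, l₂, rfl, hl₁, hl₂⟩ := List.sublist_append_iff.mp hsub
  rcases List.sublist_singleton.mp hl₂ with rfl | rfl
  · rw [List.append_nil] at hω' ⊢
    exact .inl ⟨κ, hκred, hκ, l₁, hl₁, hω', rfl⟩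
  · obtain ⟨hl₁red, hasc⟩ := isReduced_append_singleton_iff.mp hω'
    simp only [wordProd_append, wordProd_singleton, simple_mul_simple_cancel_right]
    exact .inr ⟨cs.isRightDescent_iff_not_isRightDescent_mul.mpr (by simpa using hasc),
      κ, hκred, hκ, l₁, hl₁, hl₁red, rfl⟩

theorem bruhatLE_mul_simple_of_not_isRightDescent {a w : W} {i : B} (h : bruhatLE cs a w)
    (hw : cs.IsRightDescent w i) (ha : ¬cs.IsRightDescent a i) : bruhatLE cs a (w * s i) :=
  (bruhatLE_mul_simple_or h hw).resolve_right fun h' ↦ ha h'.1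

theorem bruhatLE_mul_simple_mul_simple {a w : W} {i : B} (h : bruhatLE cs a w)
    (hw : cs.IsRightDescent w i) (ha : cs.IsRightDescent a i) :
    bruhatLE cs (a * s i) (w * s i) :=
  (bruhatLE_mul_simple_or h hw).elim (bruhatLE_trans (bruhatLE_mul_simple_self ha)) And.right

theorem bruhatLE_mul_mul {u v x y : W} (huv : bruhatLE cs u v) (hyx : bruhatLE cs y x)
    (hlen : ℓ u = ℓ x + ℓ (u * x)) : bruhatLE cs (u * x) (v * y) := by
  rcases eq_or_ne x 1 with rfl | hx
  · obtain rfl : y = 1 := cs.length_eq_zero_iff.mp (by simpa using length_le_of_bruhatLE hyx)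
    simpa using huv
  obtain ⟨i, hxi⟩ := cs.exists_rightDescent_of_ne_one hx
  have hx' := cs.isRightDescent_iff.mp hxi
  have hux : ℓ (u * x * s i) = ℓ (u * x) + 1 := by
    have := cs.length_mul_simple (u * x) i
    have := cs.length_le_length_mul_add_right u (x * s i)
    rw [← mul_assoc] at this
    omega
  have hlen' : ℓ u = ℓ (x * s i) + ℓ (u * (x * s i)) := by
    rw [← mul_assoc]
    omega
  have huxi : cs.IsRightDescent (u * x * s i) i := by
    rw [cs.isRightDescent_iff, simple_mul_simple_cancel_right, hux]
  have hdrop : bruhatLE cs (u * x) (u * x * s i) := by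
    simpa using bruhatLE_mul_simple_self huxi
  by_cases hyi : cs.IsRightDescent y i
  · have ih := bruhatLE_mul_mul huv (bruhatLE_mul_simple_mul_simple hyx hxi hyi) hlen'
    rw [← mul_assoc, ← mul_assoc] at ih
    by_cases hvyi : cs.IsRightDescent (v * y * s i) i
    · simpa using bruhatLE_mul_simple_mul_simple ih hvyi huxi
    · have hvy : cs.IsRightDescent (v * y) i :=
        cs.isRightDescent_iff_not_isRightDescent_mul.mpr hvyi
      exact bruhatLE_trans (bruhatLE_trans hdrop ih) (bruhatLE_mul_simple_self hvy)
  · have ih := bruhatLE_mul_mul huv (bruhatLE_mul_simple_of_not_isRightDescent hyx hxi hyi) hlen'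
    rw [← mul_assoc] at ih
    exact bruhatLE_trans hdrop ih
termination_by cs.length x
decreasing_by all_goals omega

end CoxeterSystem

/-- If `u ≤ v`, `y ≤ x`, and `x⁻¹ ≤_L u` in the left weak order
(`ℓ(u) = ℓ(x⁻¹) + ℓ(ux)`), then `ux ≤ vy`. -/
theorem stmt9 {B W : Type*} [Group W] {M : CoxeterMatrix B} (cs : CoxeterSystem M W)
    (u v x y : W) (h1 : bruhatLE cs u v) (h2 : bruhatLE cs y x)
    (h3 : cs.length u = cs.length x⁻¹ + cs.length (u * x)) :
    bruhatLE cs (u * x) (v * y) :=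
  cs.bruhatLE_mul_mul h1 h2 (by rwa [← cs.length_inv x])
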